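/- Let m ∈ ℕ with m ≥ 1, let ℓ₁,…,ℓ_d > 0, σ_s² > 0, and x, x' ∈ ℝ^d. Let P denote the product (over i ∈ {1,…,m}) of m independent copies of the Gaussian spectral measure on ℝ^d whose coordinates are independent Gaussians with mean 0 and variance 1/(4π²ℓ_j²). Then the integral of (r₁,…,r_m) ↦ (σ_s²/m) Σ_{i=1}^m cos(2π⟨r_i, x − x'⟩) with respect to P equals σ_s² · exp(−(1/2) Σ_{j=1}^d (x_j − x'_j)²/ℓ_j²), i.e., the sampled spectral kernel estimator is an unbiased estimator of the squared exponential kernel. -/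

import Mathlib

open MeasureTheory ProbabilityTheory Real

/-!
The estimator is an average of `m` terms, each depending on a single frequency `rᵢ`, so its
mean is the mean of one term. That term is the real part of `exp (i ⟪t, r⟫)` with
`t = 2π (x - x')`, whose mean under a product of centred Gaussians is the product of their
characteristic functions `exp (-vⱼ tⱼ² / 2)`; the variances `vⱼ = 1 / (4π² ℓⱼ²)` turn this
into the squared exponential kernel.
-/

lemma integral_cexp_sum_mul_I_pi {ι : Type*} [Fintype ι] {μ : ι → Measure ℝ}
    [∀ i, SigmaFinite (μ i)] (t : ι → ℝ) :
    ∫ r, Complex.exp ((∑ i, t i * r i : ℝ) * Complex.I) ∂Measure.pi μ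
      = ∏ i, charFun (μ i) (t i) := by
  simp_rw [charFun_apply_real, ← integral_fintype_prod_eq_prod, ← Complex.exp_sum,
    Complex.ofReal_sum, Finset.sum_mul, Complex.ofReal_mul]

lemma integral_cos_sum_mul_pi {ι : Type*} [Fintype ι] {μ : ι → Measure ℝ}
    [∀ i, IsFiniteMeasure (μ i)] (t : ι → ℝ) :
    ∫ r, cos (∑ i, t i * r i) ∂Measure.pi μ = (∏ i, charFun (μ i) (t i)).re := by
  have hint : Integrable (fun r : ι → ℝ ↦ Complex.exp ((∑ i, t i * r i : ℝ) * Complex.I))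
      (Measure.pi μ) :=
    .of_bound (Continuous.aestronglyMeasurable (by fun_prop)) 1
      (ae_of_all _ fun r ↦ (Complex.norm_exp_ofReal_mul_I _).le)
  rw [← integral_cexp_sum_mul_I_pi, ← RCLike.re_eq_complex_re, ← integral_re hint]
  simp_rw [RCLike.re_eq_complex_re, Complex.exp_ofReal_mul_I_re]

lemma integral_cos_sum_mul_pi_gaussianReal {ι : Type*} [Fintype ι] (v : ι → NNReal)
    (t : ι → ℝ) :
    ∫ r, cos (∑ i, t i * r i) ∂Measure.pi (fun i ↦ gaussianReal 0 (v i))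
      = exp (-∑ i, v i * t i ^ 2 / 2) := by
  simp_rw [integral_cos_sum_mul_pi, charFun_gaussianReal, ← Complex.exp_sum]
  rw [← Complex.exp_ofReal_re]
  congr 2
  push_cast
  simp [Finset.sum_neg_distrib]

theorem sampled_spectral_kernel_unbiased_general (d m : ℕ) (hm : 1 ≤ m)
    (ℓ : Fin d → ℝ) (σs2 : ℝ)
    (x x' : Fin d → ℝ) :
    ∫ R : Fin m → Fin d → ℝ,
        (σs2 / m) * ∑ i : Fin m, Real.cos (2 * π * ∑ j, R i j * (x j - x' j))
        ∂(Measure.pi fun _ : Fin m =>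
            Measure.pi fun j : Fin d =>
              gaussianReal 0 (Real.toNNReal (1 / (4 * π ^ 2 * (ℓ j) ^ 2))))
      = σs2 * Real.exp (-(1 / 2) * ∑ j, (x j - x' j) ^ 2 / (ℓ j) ^ 2) := by
  set v : Fin d → NNReal := fun j ↦ Real.toNNReal (1 / (4 * π ^ 2 * ℓ j ^ 2))
  set f : (Fin d → ℝ) → ℝ := fun r ↦ cos (2 * π * ∑ j, r j * (x j - x' j))
  have hf_cont : Continuous f := by fun_prop
  have hf_eq : f = fun r ↦ cos (∑ j, 2 * π * (x j - x' j) * r j) := by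
    ext r
    simp only [f, Finset.mul_sum]
    congr 1
    exact Finset.sum_congr rfl fun j _ ↦ by ring
  have hexponent : -∑ j, (v j : ℝ) * (2 * π * (x j - x' j)) ^ 2 / 2
      = -(1 / 2) * ∑ j, (x j - x' j) ^ 2 / ℓ j ^ 2 := by
    rw [Finset.mul_sum, ← Finset.sum_neg_distrib]
    refine Finset.sum_congr rfl fun j _ ↦ ?_
    rw [Real.coe_toNNReal _ (by positivity)]
    field_simp
    ring
  have hone (i : Fin m) :
      ∫ R : Fin m → Fin d → ℝ, f (R i)
          ∂Measure.pi (fun _ ↦ Measure.pi fun j ↦ gaussianReal 0 (v j))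
        = exp (-(1 / 2) * ∑ j, (x j - x' j) ^ 2 / ℓ j ^ 2) := by
    rw [integral_comp_eval hf_cont.aestronglyMeasurable, hf_eq,
      integral_cos_sum_mul_pi_gaussianReal, hexponent]
  have hf_int : Integrable f (Measure.pi fun j ↦ gaussianReal 0 (v j)) :=
    .of_bound hf_cont.aestronglyMeasurable 1 (ae_of_all _ fun r ↦ abs_cos_le_one _)
  change ∫ R, σs2 / m * ∑ i, f (R i)
    ∂Measure.pi (fun _ ↦ Measure.pi fun j ↦ gaussianReal 0 (v j)) = _
  rw [integral_const_mul, integral_finsetSum _ fun i _ ↦ integrable_comp_eval hf_int]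
  simp_rw [hone]
  rw [Finset.sum_const, Finset.card_univ, Fintype.card_fin, nsmul_eq_mul]
  have hm0 : (m : ℝ) ≠ 0 := Nat.cast_ne_zero.mpr (by omega)
  field_simp

/-- The sampled spectral kernel estimator built from `m` i.i.d. spectral
frequencies drawn from the Gaussian spectral measure is an unbiased estimator
of the squared exponential kernel. -/
theorem sampled_spectral_kernel_unbiased (d m : ℕ) (hm : 1 ≤ m)
    (ℓ : Fin d → ℝ) (hℓ : ∀ j, 0 < ℓ j) (σs2 : ℝ) (hσ : 0 < σs2)
    (x x' : Fin d → ℝ) :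
    ∫ R : Fin m → Fin d → ℝ,
        (σs2 / m) * ∑ i : Fin m, Real.cos (2 * π * ∑ j, R i j * (x j - x' j))
        ∂(Measure.pi fun _ : Fin m =>
            Measure.pi fun j : Fin d =>
              gaussianReal 0 (Real.toNNReal (1 / (4 * π ^ 2 * (ℓ j) ^ 2))))
      = σs2 * Real.exp (-(1 / 2) * ∑ j, (x j - x' j) ^ 2 / (ℓ j) ^ 2) :=
  sampled_spectral_kernel_unbiased_general d m hm ℓ σs2 x x'
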